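/- Let p ≥ 3 and let T be the star K_{1,p} (a tree consisting of one center adjacent to p leaves), and let G be the graph obtained from T by isomorphic leaf matching. Then G is a minimal bipartite matching covered graph satisfying m = (3n − 6)/2, i.e. 2m = 3n − 6, where n is the number of vertices and m the number of edges of G. -/

import Mathlib

open SimpleGraph

/-- The degree of a vertex `v` in a graph `G`: the number of neighbours of `v`. -/
noncomputable def degN {V : Type*} (G : SimpleGraph V) (v : V) : ℕ :=
  (G.neighborSet v).ncard

/-- A finite simple graph is matching covered if it is connected, has at least 4 vertices,
and every edge lies in some perfect matching. -/
def MatchingCovered {V : Type*} [Fintype V] (G : SimpleGraph V) : Prop :=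
  G.Connected ∧ 4 ≤ Fintype.card V ∧
    ∀ e ∈ G.edgeSet, ∃ M : G.Subgraph, M.IsPerfectMatching ∧ e ∈ M.edgeSet

/-- A matching covered graph is minimal if deleting any edge destroys the property. -/
def MinimalMatchingCovered {V : Type*} [Fintype V] (G : SimpleGraph V) : Prop :=
  MatchingCovered G ∧ ∀ e ∈ G.edgeSet, ¬ MatchingCovered (G.deleteEdges {e})

/-- The graph obtained from a tree `T` by isomorphic leaf matching: two disjoint copies of `T`
(the `inl` copy and the `inr` copy), together with an edge joining the two copies of each
leaf (degree-1 vertex) of `T`. -/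
def leafMatching {V : Type*} (T : SimpleGraph V) : SimpleGraph (V ⊕ V) where
  Adj x y :=
    match x, y with
    | Sum.inl u, Sum.inl v => T.Adj u v
    | Sum.inr u, Sum.inr v => T.Adj u v
    | Sum.inl u, Sum.inr v => u = v ∧ degN T u = 1
    | Sum.inr u, Sum.inl v => u = v ∧ degN T v = 1
  symm := by
    constructor
    rintro (u | u) (v | v) h
    · exact T.adj_symm h
    · exact ⟨h.1.symm, h.2⟩
    · exact ⟨h.1.symm, h.2⟩
    · exact T.adj_symm h
  loopless := by
    constructor
    rintro (u | u) h
    · exact T.loopless.irrefl u h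
    · exact T.loopless.irrefl u h

/-- The star `K_{1,p}`: one center vertex (`none`) adjacent to `p` leaf vertices. -/
def starGraph (p : ℕ) : SimpleGraph (Option (Fin p)) where
  Adj x y := x ≠ y ∧ (x = none ∨ y = none)
  symm := ⟨fun _ _ h => ⟨h.1.symm, h.2.symm⟩⟩
  loopless := ⟨fun _ h => h.1 rfl⟩

/-! The graph consists of `p` internally disjoint paths `c — ℓⱼ — ℓ'ⱼ — c'` of length three
between the two copies `c = inl none`, `c' = inr none` of the center, where
`ℓⱼ = inl (some j)` and `ℓ'ⱼ = inr (some j)`. Matching `c` with `ℓᵢ`, `c'` with `ℓ'ᵢ` and every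
other `ℓⱼ` with `ℓ'ⱼ` gives `p` perfect matchings covering all edges. Conversely, since `ℓⱼ` and
`ℓ'ⱼ` have degree two, a perfect matching contains `cℓⱼ` iff it avoids `ℓⱼℓ'ⱼ` iff it contains
`c'ℓ'ⱼ`; so after deleting `cℓⱼ` the edge `c'ℓ'ⱼ` lies in no perfect matching (and symmetrically),
and after deleting `ℓⱼℓ'ⱼ` the edge `cℓₖ`, `k ≠ j`, lies in none. -/

open Function Sum

namespace SimpleGraph.Subgraph

variable {V : Type*} {G : SimpleGraph V}

lemma IsPerfectMatching.adj_iff_not_adj {M : G.Subgraph} (hM : M.IsPerfectMatching)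
    {v a b : V} (hab : a ≠ b) (hv : ∀ w, M.Adj v w → w = a ∨ w = b) :
    M.Adj v a ↔ ¬ M.Adj v b := by
  obtain ⟨w, hw, -⟩ := hM.1 (hM.2 v)
  refine ⟨fun ha hb => hab (hM.1.eq_of_adj_left ha hb), fun hb => ?_⟩
  rcases hv w hw with rfl | rfl
  · exact hw
  · exact absurd hw hb

lemma exists_isPerfectMatching_of_involutive {f : V → V} (hf : Involutive f)
    (hG : ∀ v, G.Adj v (f v)) : ∃ M : G.Subgraph, M.IsPerfectMatching ∧ ∀ v, M.Adj v (f v) := by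
  let M : G.Subgraph :=
    { verts := Set.univ
      Adj := fun v w => f v = w
      adj_sub := by rintro v _ rfl; exact hG v
      edge_vert := fun _ => Set.mem_univ _
      symm := ⟨fun v _ h => by rw [← h, hf v]⟩ }
  exact ⟨M, ⟨fun v _ => ⟨f v, rfl, fun _ h => Eq.symm h⟩, Set.mem_univ⟩, fun _ => rfl⟩

end SimpleGraph.Subgraph

section leafMatching

variable {V : Type*} {T : SimpleGraph V} {u v : V}

@[simp] lemma leafMatching_adj_inl_inl : (leafMatching T).Adj (inl u) (inl v) ↔ T.Adj u v :=
  Iff.rfl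

@[simp] lemma leafMatching_adj_inr_inr : (leafMatching T).Adj (inr u) (inr v) ↔ T.Adj u v :=
  Iff.rfl

@[simp] lemma leafMatching_adj_inl_inr :
    (leafMatching T).Adj (inl u) (inr v) ↔ u = v ∧ degN T u = 1 :=
  Iff.rfl

@[simp] lemma leafMatching_adj_inr_inl :
    (leafMatching T).Adj (inr u) (inl v) ↔ u = v ∧ degN T v = 1 :=
  Iff.rfl

lemma leafMatching_colorable_two (hT : T.Colorable 2) : (leafMatching T).Colorable 2 := by
  obtain ⟨C⟩ := hT
  have hflip : ∀ c : Fin 2, c ≠ c + 1 := by decide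
  refine ⟨Coloring.mk (Sum.elim C (C · + 1)) ?_⟩
  rintro (u | u) (v | v) h
  · exact C.valid h
  · obtain ⟨rfl, -⟩ := h; exact hflip _
  · obtain ⟨rfl, -⟩ := h; exact (hflip _).symm
  · exact fun hc => C.valid h (add_right_cancel hc)

lemma leafMatching_connected (hT : T.Preconnected) (hleaf : degN T u = 1) :
    (leafMatching T).Connected := by
  let toInl : T →g leafMatching T := ⟨inl, id⟩
  let toInr : T →g leafMatching T := ⟨inr, id⟩
  have hrung : (leafMatching T).Adj (inl u) (inr u) := ⟨rfl, hleaf⟩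
  refine (connected_iff_exists_forall_reachable _).2 ⟨inl u, ?_⟩
  rintro (v | v)
  · exact (hT u v).map toInl
  · exact hrung.reachable.trans ((hT u v).map toInr)

end leafMatching

section starGraph

variable {p : ℕ}

@[simp] lemma starGraph_adj {x y : Option (Fin p)} :
    (_root_.starGraph p).Adj x y ↔ x ≠ y ∧ (x = none ∨ y = none) :=
  Iff.rfl

lemma degN_starGraph_some (j : Fin p) : degN (_root_.starGraph p) (some j) = 1 := by
  have : (_root_.starGraph p).neighborSet (some j) = {none} := by
    ext (_ | k) <;> simp
  rw [degN, this, Set.ncard_singleton]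

lemma degN_starGraph_none : degN (_root_.starGraph p) none = p := by
  have : (_root_.starGraph p).neighborSet none = Set.range some := by
    ext (_ | k) <;> simp
  rw [degN, this, Set.ncard_range_of_injective (Option.some_injective _), Nat.card_eq_fintype_card,
    Fintype.card_fin]

lemma starGraph_preconnected : (_root_.starGraph p).Preconnected := by
  have hcenter : ∀ x, (_root_.starGraph p).Reachable none x := by
    rintro (_ | j)
    · rfl
    · exact Adj.reachable (by simp)
  exact fun x y => (hcenter x).symm.trans (hcenter y)

lemma starGraph_colorable_two : (_root_.starGraph p).Colorable 2 := by
  refine ⟨Coloring.mk (fun x => if x = none then 0 else 1) ?_⟩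
  rintro (_ | i) (_ | j) h <;> simp_all

end starGraph

namespace StarLeafMatching

local notation "Θ" p:max => leafMatching (_root_.starGraph p)

variable {p : ℕ}

/-- The edges `cℓⱼ`, `ℓⱼℓ'ⱼ`, `c'ℓ'ⱼ` (first, second, third summand) of the `j`-th path. -/
def pathEdge : Fin p ⊕ Fin p ⊕ Fin p → Sym2 (Option (Fin p) ⊕ Option (Fin p))
  | .inl j => s(inl none, inl (some j))
  | .inr (.inl j) => s(inl (some j), inr (some j))
  | .inr (.inr j) => s(inr none, inr (some j))

lemma pathEdge_injective : Injective (pathEdge (p := p)) := by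
  rintro (j | j | j) (k | k | k) h <;> simp_all [pathEdge]

lemma edgeSet_eq (hp : p ≠ 1) : (Θ p).edgeSet = Set.range pathEdge := by
  ext e
  induction e using Sym2.ind with
  | _ x y =>
  constructor
  · intro h
    rcases x with (_ | j) | (_ | j) <;> rcases y with (_ | k) | (_ | k) <;>
      simp_all [pathEdge, degN_starGraph_some, degN_starGraph_none, Sym2.eq_swap]
  · rintro ⟨(j | j | j), h⟩ <;> rw [← h] <;> simp [pathEdge, degN_starGraph_some]

lemma two_mul_ncard_edgeSet_add_six (hp : p ≠ 1) :
    2 * (Θ p).edgeSet.ncard + 6 = 3 * Fintype.card (Option (Fin p) ⊕ Option (Fin p)) := by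
  rw [edgeSet_eq hp, Set.ncard_range_of_injective pathEdge_injective, Nat.card_eq_fintype_card]
  simp only [Fintype.card_sum, Fintype.card_option, Fintype.card_fin]
  ring

/-- `partner i` pairs the vertices as the perfect matching through `cℓᵢ` does. -/
def partner (i : Fin p) : Option (Fin p) ⊕ Option (Fin p) → Option (Fin p) ⊕ Option (Fin p)
  | inl none => inl (some i)
  | inr none => inr (some i)
  | inl (some j) => if j = i then inl none else inr (some j)
  | inr (some j) => if j = i then inr none else inl (some j)

lemma partner_involutive (i : Fin p) : Involutive (partner i) := by
  rintro ((_ | j) | (_ | j)) <;> simp only [partner] <;> split_ifs <;> simp_all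

lemma adj_partner (i : Fin p) (x : Option (Fin p) ⊕ Option (Fin p)) :
    (Θ p).Adj x (partner i x) := by
  rcases x with (_ | j) | (_ | j)
  · simp [partner]
  · by_cases h : j = i <;> simp [partner, h, degN_starGraph_some]
  · simp [partner]
  · by_cases h : j = i <;> simp [partner, h, degN_starGraph_some]

lemma exists_isPerfectMatching_mem_edgeSet (hp : 2 ≤ p)
    {e : Sym2 (Option (Fin p) ⊕ Option (Fin p))} (he : e ∈ (Θ p).edgeSet) :
    ∃ M : (Θ p).Subgraph, M.IsPerfectMatching ∧ e ∈ M.edgeSet := by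
  suffices ∃ i x, e = s(x, partner i x) by
    obtain ⟨i, x, rfl⟩ := this
    obtain ⟨M, hM, hadj⟩ :=
      Subgraph.exists_isPerfectMatching_of_involutive (partner_involutive i) (adj_partner i)
    exact ⟨M, hM, hadj x⟩
  have : Nontrivial (Fin p) := Fin.nontrivial_iff_two_le.2 hp
  rw [edgeSet_eq (by omega)] at he
  obtain ⟨j | j | j, rfl⟩ := he
  · exact ⟨j, inl none, rfl⟩
  · obtain ⟨k, hk⟩ := exists_ne j
    exact ⟨k, inl (some j), by simp [pathEdge, partner, hk.symm]⟩
  · exact ⟨j, inr none, rfl⟩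

lemma matchingCovered (hp : 2 ≤ p) : MatchingCovered (Θ p) := by
  refine ⟨leafMatching_connected starGraph_preconnected (degN_starGraph_some ⟨0, by omega⟩),
    ?_, fun _ => exists_isPerfectMatching_mem_edgeSet hp⟩
  simp only [Fintype.card_sum, Fintype.card_option, Fintype.card_fin]
  omega

lemma adj_inl_some_iff {j : Fin p} {w : Option (Fin p) ⊕ Option (Fin p)} :
    (Θ p).Adj (inl (some j)) w ↔ w = inr (some j) ∨ w = inl none := by
  rcases w with (_ | k) | (_ | k) <;> simp [degN_starGraph_some, eq_comm]

lemma adj_inr_some_iff {j : Fin p} {w : Option (Fin p) ⊕ Option (Fin p)} :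
    (Θ p).Adj (inr (some j)) w ↔ w = inl (some j) ∨ w = inr none := by
  rcases w with (_ | k) | (_ | k) <;> simp [degN_starGraph_some, eq_comm]

section perfectMatching

variable {H : SimpleGraph (Option (Fin p) ⊕ Option (Fin p))} {M : H.Subgraph}

lemma adj_inl_some_inr_some_iff (hH : H ≤ Θ p) (hM : M.IsPerfectMatching) (j : Fin p) :
    M.Adj (inl (some j)) (inr (some j)) ↔ ¬ M.Adj (inl none) (inl (some j)) := by
  rw [M.adj_comm (inl none)]
  exact hM.adj_iff_not_adj (by simp) fun w hw => adj_inl_some_iff.1 (hH (M.adj_sub hw))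

lemma adj_inl_none_iff_adj_inr_none (hH : H ≤ Θ p) (hM : M.IsPerfectMatching) (j : Fin p) :
    M.Adj (inl none) (inl (some j)) ↔ M.Adj (inr none) (inr (some j)) := by
  have hdeg2 : M.Adj (inr (some j)) (inl (some j)) ↔ ¬ M.Adj (inr (some j)) (inr none) :=
    hM.adj_iff_not_adj (by simp) fun w hw => adj_inr_some_iff.1 (hH (M.adj_sub hw))
  rw [M.adj_comm _ (inl (some j)), adj_inl_some_inr_some_iff hH hM, M.adj_comm _ (inr none)]
    at hdeg2
  tauto

end perfectMatching

lemma not_matchingCovered_deleteEdges (hp : 2 ≤ p)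
    {e : Sym2 (Option (Fin p) ⊕ Option (Fin p))} (he : e ∈ (Θ p).edgeSet) :
    ¬ MatchingCovered ((Θ p).deleteEdges {e}) := by
  rintro ⟨-, -, hcov⟩
  have hH : (Θ p).deleteEdges {e} ≤ Θ p := deleteEdges_le _
  have hdel : ∀ {M : ((Θ p).deleteEdges {e}).Subgraph} {x y}, M.Adj x y → s(x, y) ≠ e :=
    fun {M} _ _ h => ((deleteEdges_adj ..).1 (M.adj_sub h)).2
  have : Nontrivial (Fin p) := Fin.nontrivial_iff_two_le.2 hp
  rw [edgeSet_eq (by omega)] at he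
  obtain ⟨j | j | j, rfl⟩ := he
  · obtain ⟨M, hM, hf⟩ := hcov s(inr none, inr (some j)) (by simp [pathEdge])
    exact hdel ((adj_inl_none_iff_adj_inr_none hH hM j).2 hf) rfl
  · obtain ⟨k, hk⟩ := exists_ne j
    obtain ⟨M, hM, hf⟩ := hcov s(inl none, inl (some k)) (by simp [pathEdge, hk])
    have hkj : ¬ M.Adj (inl none) (inl (some j)) :=
      hM.1.not_adj_left_of_ne (by simpa using hk) hf
    exact hdel ((adj_inl_some_inr_some_iff hH hM j).2 hkj) rfl
  · obtain ⟨M, hM, hf⟩ := hcov s(inl none, inl (some j)) (by simp [pathEdge])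
    exact hdel ((adj_inl_none_iff_adj_inr_none hH hM j).1 hf) rfl

lemma minimalMatchingCovered (hp : 2 ≤ p) : MinimalMatchingCovered (Θ p) :=
  ⟨matchingCovered hp, fun _ => not_matchingCovered_deleteEdges hp⟩

end StarLeafMatching

/-- The graph obtained from the star `K_{1,p}`, `p ≥ 3`, by isomorphic leaf matching is a
minimal bipartite matching covered graph with `m = (3n - 6)/2`. -/
theorem stmt8 (p : ℕ) (hp : 3 ≤ p) :
    (leafMatching (_root_.starGraph p)).Colorable 2 ∧
      MinimalMatchingCovered (leafMatching (_root_.starGraph p)) ∧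
      2 * (leafMatching (_root_.starGraph p)).edgeSet.ncard + 6
        = 3 * Fintype.card (Option (Fin p) ⊕ Option (Fin p)) :=
  ⟨leafMatching_colorable_two starGraph_colorable_two,
    StarLeafMatching.minimalMatchingCovered (by omega),
    StarLeafMatching.two_mul_ncard_edgeSet_add_six (by omega)⟩
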